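/- arXiv:math/0110251 — 5 statements merged into one kernel-verified Lean document; each statement's English description precedes it below -/
import Mathlib

section
/- The function E(s) = (1 - r'(s)^2) · cosh^2(r(s)) · sinh^{2n}(r(s)) is constant along any solution r of the ODE r'' sinh r cosh r = (1 - (r')^2)(sinh^2 r + n cosh^2 r). -/
open Real

noncomputable def energy (n : ℕ) (x v : ℝ) : ℝ :=
  (1 - v ^ 2) * cosh x ^ 2 * sinh x ^ (2 * n)

theorem hasDerivAt_energy_comp {n : ℕ} (hn : 1 ≤ n) {r v : ℝ → ℝ} {s q : ℝ}
    (hr : HasDerivAt r (v s) s) (hv : HasDerivAt v q s) :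
    HasDerivAt (fun x => energy n (r x) (v x))
      (2 * v s * cosh (r s) * sinh (r s) ^ (2 * n - 1) *
        ((1 - v s ^ 2) * (sinh (r s) ^ 2 + n * cosh (r s) ^ 2) -
          q * sinh (r s) * cosh (r s))) s := by
  have hsinh := (hasDerivAt_sinh (r s)).comp s hr
  have hcosh := (hasDerivAt_cosh (r s)).comp s hr
  have hprod := ((hv.fun_pow 2).const_sub 1).fun_mul (hcosh.fun_pow 2) |>.fun_mul
    (hsinh.fun_pow (2 * n))
  refine hprod.congr_deriv ?_
  have hpow : sinh (r s) ^ (2 * n) = sinh (r s) ^ (2 * n - 1) * sinh (r s) := by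
    rw [← pow_succ]; congr 1; omega
  simp only [Function.comp_apply, hpow]
  push_cast
  ring

theorem stmt0_general (n : ℕ) (hn : 1 ≤ n) (r : ℝ → ℝ)
    (hr : Differentiable ℝ r) (hr' : Differentiable ℝ (deriv r))
    (hode : ∀ s, deriv (deriv r) s * Real.sinh (r s) * Real.cosh (r s) =
      (1 - (deriv r s) ^ 2) * (Real.sinh (r s) ^ 2 + (n : ℝ) * Real.cosh (r s) ^ 2)) :
    ∀ s t : ℝ,
      (1 - (deriv r s) ^ 2) * Real.cosh (r s) ^ 2 * Real.sinh (r s) ^ (2 * n) =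
      (1 - (deriv r t) ^ 2) * Real.cosh (r t) ^ 2 * Real.sinh (r t) ^ (2 * n) := by
  have hderiv : ∀ s, HasDerivAt (fun x => energy n (r x) (deriv r x)) 0 s := fun s => by
    simpa [hode s] using hasDerivAt_energy_comp hn (hr s).hasDerivAt (hr' s).hasDerivAt
  exact is_const_of_deriv_eq_zero (fun s => (hderiv s).differentiableAt)
    (fun s => (hderiv s).deriv)

theorem stmt0 (n : ℕ) (hn : 1 ≤ n) (r : ℝ → ℝ)
    (hr : Differentiable ℝ r) (hr' : Differentiable ℝ (deriv r))
    (hpos : ∀ s, 0 < r s)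
    (hode : ∀ s, deriv (deriv r) s * Real.sinh (r s) * Real.cosh (r s) =
      (1 - (deriv r s) ^ 2) * (Real.sinh (r s) ^ 2 + (n : ℝ) * Real.cosh (r s) ^ 2)) :
    ∀ s t : ℝ,
      (1 - (deriv r s) ^ 2) * Real.cosh (r s) ^ 2 * Real.sinh (r s) ^ (2 * n) =
      (1 - (deriv r t) ^ 2) * Real.cosh (r t) ^ 2 * Real.sinh (r t) ^ (2 * n) :=
  stmt0_general n hn r hr hr' hode
end

section
/- If r satisfies the ODE r'' sinh r cosh r = (1-(r')^2)(sinh^2 r + n cosh^2 r) with r(0) = ρ > 0 and r'(0) = 0, then r(s) ≥ ρ for all s, i.e. s = 0 is an absolute minimum of r. -/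
/-!
Multiplying the equation by `2 r' cosh r sinh^(2n-1) r` shows that
`(1 - r'^2) cosh^2 r sinh^(2n) r` is a first integral; at `s = 0` it equals
`cosh^2 ρ sinh^(2n) ρ`. Since `1 - r'^2 ≤ 1`, this gives
`cosh^2 ρ sinh^(2n) ρ ≤ cosh^2 r sinh^(2n) r`, and `x ↦ cosh^2 x sinh^(2n) x` is strictly
increasing on `(0, ∞)`, so `ρ ≤ r`.
-/

open Real Set

noncomputable def coshSinhWeight (n : ℕ) (x : ℝ) : ℝ := cosh x ^ 2 * sinh x ^ (2 * n)

namespace coshSinhWeight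

lemma nonneg (n : ℕ) (x : ℝ) : 0 ≤ coshSinhWeight n x := by
  unfold coshSinhWeight
  rw [pow_mul]
  positivity

lemma differentiable (n : ℕ) : Differentiable ℝ (coshSinhWeight n) := by
  unfold coshSinhWeight
  fun_prop

/-- `w' / w = 2 (sinh² + n cosh²) / (sinh cosh)`, cleared of denominators so that it holds for
all `n` and `x`. -/
lemma deriv_mul_sinh_mul_cosh (n : ℕ) (x : ℝ) :
    deriv (coshSinhWeight n) x * (sinh x * cosh x) =
      2 * coshSinhWeight n x * (sinh x ^ 2 + n * cosh x ^ 2) := by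
  have hcosh := (hasDerivAt_cosh x).pow 2
  have hsinh := ((hasDerivAt_sinh x).pow 2).pow n
  have hd := (hcosh.mul hsinh).congr_of_eventuallyEq (f₁ := coshSinhWeight n)
    (.of_forall fun y => by simp [coshSinhWeight, pow_mul])
  rw [hd.deriv, coshSinhWeight]
  rcases n with _ | m <;> simp only [Pi.pow_apply, Nat.add_sub_cancel] <;> push_cast <;> ring

lemma strictMonoOn (n : ℕ) : StrictMonoOn (coshSinhWeight n) (Ioi 0) := by
  intro x hx y hy hxy
  have hx : 0 < x := hx
  have hy : 0 < y := hy
  have hcosh : cosh x ^ 2 < cosh y ^ 2 := by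
    gcongr
    rwa [cosh_lt_cosh, abs_of_pos hx, abs_of_pos hy]
  have hsinh : sinh x ^ (2 * n) ≤ sinh y ^ (2 * n) := by
    gcongr
    exact sinh_le_sinh.mpr hxy.le
  exact mul_lt_mul hcosh hsinh (pow_pos (sinh_pos_iff.mpr hx) _) (by positivity)

end coshSinhWeight

noncomputable def firstIntegral (n : ℕ) (r : ℝ → ℝ) (s : ℝ) : ℝ :=
  (1 - deriv r s ^ 2) * coshSinhWeight n (r s)

section FirstIntegral

variable {n : ℕ} {r : ℝ → ℝ}

lemma hasDerivAt_firstIntegral (hr : Differentiable ℝ r) (hr' : Differentiable ℝ (deriv r))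
    (s : ℝ) :
    HasDerivAt (firstIntegral n r)
      (-(2 * deriv r s * deriv (deriv r) s) * coshSinhWeight n (r s) +
        (1 - deriv r s ^ 2) * (deriv (coshSinhWeight n) (r s) * deriv r s)) s := by
  have h1 : HasDerivAt (fun t => 1 - deriv r t ^ 2) (-(2 * deriv r s * deriv (deriv r) s)) s := by
    simpa using ((hr' s).hasDerivAt.pow 2).const_sub 1
  exact h1.mul (((coshSinhWeight.differentiable n) (r s)).hasDerivAt.comp s (hr s).hasDerivAt)

lemma firstIntegral_eq (hr : Differentiable ℝ r) (hr' : Differentiable ℝ (deriv r))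
    (hpos : ∀ s, 0 < r s)
    (hode : ∀ s, deriv (deriv r) s * sinh (r s) * cosh (r s) =
      (1 - deriv r s ^ 2) * (sinh (r s) ^ 2 + n * cosh (r s) ^ 2))
    (s t : ℝ) : firstIntegral n r s = firstIntegral n r t := by
  refine is_const_of_deriv_eq_zero (fun u => (hasDerivAt_firstIntegral hr hr' u).differentiableAt)
    (fun u => ?_) s t
  rw [(hasDerivAt_firstIntegral hr hr' u).deriv]
  have hsc : sinh (r u) * cosh (r u) ≠ 0 :=
    (mul_pos (sinh_pos_iff.mpr (hpos u)) (cosh_pos _)).ne'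
  refine (mul_left_inj' hsc).mp ?_
  linear_combination (-2 * deriv r u * coshSinhWeight n (r u)) * hode u +
    (1 - deriv r u ^ 2) * deriv r u * coshSinhWeight.deriv_mul_sinh_mul_cosh n (r u)

end FirstIntegral

theorem stmt1_general (n : ℕ) (ρ : ℝ) (r : ℝ → ℝ)
    (hr : Differentiable ℝ r) (hr' : Differentiable ℝ (deriv r))
    (hpos : ∀ s, 0 < r s)
    (hode : ∀ s, deriv (deriv r) s * Real.sinh (r s) * Real.cosh (r s) =
      (1 - (deriv r s) ^ 2) * (Real.sinh (r s) ^ 2 + (n : ℝ) * Real.cosh (r s) ^ 2))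
    (h0 : r 0 = ρ) (h0' : deriv r 0 = 0) :
    ∀ s : ℝ, ρ ≤ r s := by
  intro s
  have hρ : 0 < ρ := h0 ▸ hpos 0
  have hconst := firstIntegral_eq hr hr' hpos hode s 0
  rw [firstIntegral, firstIntegral, h0, h0', zero_pow two_ne_zero, sub_zero, one_mul] at hconst
  have hle : coshSinhWeight n ρ ≤ coshSinhWeight n (r s) :=
    hconst ▸ mul_le_of_le_one_left (coshSinhWeight.nonneg n _) (by linarith [sq_nonneg (deriv r s)])
  exact ((coshSinhWeight.strictMonoOn n).le_iff_le hρ (hpos s)).mp hle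

theorem stmt1 (n : ℕ) (hn : 1 ≤ n) (ρ : ℝ) (hρ : 0 < ρ) (r : ℝ → ℝ)
    (hr : Differentiable ℝ r) (hr' : Differentiable ℝ (deriv r))
    (hpos : ∀ s, 0 < r s)
    (hode : ∀ s, deriv (deriv r) s * Real.sinh (r s) * Real.cosh (r s) =
      (1 - (deriv r s) ^ 2) * (Real.sinh (r s) ^ 2 + (n : ℝ) * Real.cosh (r s) ^ 2))
    (h0 : r 0 = ρ) (h0' : deriv r 0 = 0) :
    ∀ s : ℝ, ρ ≤ r s :=
  stmt1_general n ρ r hr hr' hpos hode h0 h0'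
end

section
/- Suppose z = (z₁,…,z_{n+1}) ∈ ℂ^{n+1} with n ≥ 3 satisfies Im(z Â B̂ z̄ᵗ) = 0 for all matrices A, B in the Lie algebra so(n) (where Â denotes the (n+1)×(n+1) matrix with A in the top-left n×n block and zeros elsewhere). Then the vectors Re(z₁,…,zₙ) and Im(z₁,…,zₙ) in ℝⁿ are linearly dependent. -/
/-!
Testing the hypothesis on `A = E_ij - E_ji` and `B = E_jk - E_kj`, with `j` a third index
distinct from `i` and `k` (this is where `n ≥ 3` enters), gives `A * B = E_ik`, so the
hypothesis reads `Im (z_i * conj z_k) = 0`. These are exactly the `2 × 2` minors of the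
pair of real vectors `(Re z_i)_i` and `(Im z_i)_i`, whose vanishing means the two vectors
are linearly dependent.
-/

open Matrix

theorem Fintype.exists_ne_ne_of_three_le_card {α : Type*} [Fintype α]
    (h : 3 ≤ Fintype.card α) (a b : α) : ∃ c, c ≠ a ∧ c ≠ b := by
  classical
  obtain ⟨c, -, hc⟩ := Finset.exists_mem_notMem_of_card_lt_card
    (s := {a, b}) (t := Finset.univ) (Finset.card_le_two.trans_lt h)
  exact ⟨c, by simpa [not_or] using hc⟩

section SkewBasis

variable {ι R : Type*} [DecidableEq ι] [Fintype ι] [Ring R]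

def skewSingle (i j : ι) : Matrix ι ι R := single i j 1 - single j i 1

omit [Fintype ι] in
theorem transpose_skewSingle (i j : ι) :
    (skewSingle i j : Matrix ι ι R)ᵀ = -skewSingle i j := by
  simp [skewSingle, transpose_single]

theorem skewSingle_mul_skewSingle {i j k : ι} (hij : i ≠ j) (hjk : j ≠ k) (hik : i ≠ k) :
    (skewSingle i j * skewSingle j k : Matrix ι ι R) = single i k 1 := by
  simp [skewSingle, sub_mul, mul_sub, hij, hjk, hik]

end SkewBasis

theorem sum_mul_mul_mul_ofReal_eq {ι : Type*} [Fintype ι] (A B : Matrix ι ι ℝ) (u v : ι → ℂ) :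
    ∑ i, ∑ j, ∑ k, u i * (A i j : ℂ) * (B j k : ℂ) * v k =
      ∑ i, ∑ k, u i * ((A * B) i k : ℂ) * v k := by
  simp only [mul_apply, Complex.ofReal_sum, Complex.ofReal_mul, Finset.mul_sum, Finset.sum_mul]
  refine Finset.sum_congr rfl fun i _ => Finset.sum_comm.trans ?_
  simp only [mul_assoc]

theorem sum_mul_single_mul {ι : Type*} [Fintype ι] [DecidableEq ι] (a b : ι) (u v : ι → ℂ) :
    ∑ i, ∑ k, u i * ((single a b (1 : ℝ) i k : ℝ) : ℂ) * v k = u a * v b := by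
  simp [single_apply, apply_ite (fun r : ℝ => (r : ℂ)), ite_and]

theorem exists_linear_relation_of_mul_comm {ι R : Type*} [CommRing R] [Nontrivial R]
    (x y : ι → R)
    (h : ∀ i k, x i * y k = x k * y i) :
    ∃ c d : R, (c ≠ 0 ∨ d ≠ 0) ∧ ∀ i, c * x i + d * y i = 0 := by
  by_cases hx : ∀ i, x i = 0
  · exact ⟨1, 0, Or.inl one_ne_zero, fun i => by simp [hx i]⟩
  · push Not at hx
    obtain ⟨i₀, hi₀⟩ := hx
    exact ⟨y i₀, -x i₀, Or.inr (neg_ne_zero.mpr hi₀), fun i => by linear_combination h i i₀⟩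

theorem stmt14 (n : ℕ) (hn : 3 ≤ n) (z : Fin (n + 1) → ℂ)
    (h : ∀ A B : Matrix (Fin n) (Fin n) ℝ, Aᵀ = -A → Bᵀ = -B →
      (∑ i, ∑ j, ∑ k, z (Fin.castSucc i) * (A i j : ℂ) * (B j k : ℂ) *
        (starRingEnd ℂ) (z (Fin.castSucc k))).im = 0) :
    ∃ c d : ℝ, (c ≠ 0 ∨ d ≠ 0) ∧
      ∀ i : Fin n, c * (z (Fin.castSucc i)).re + d * (z (Fin.castSucc i)).im = 0 := by
  have him : ∀ i k : Fin n, (z i.castSucc * starRingEnd ℂ (z k.castSucc)).im = 0 := by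
    intro i k
    rcases eq_or_ne i k with rfl | hik
    · simp [Complex.mul_conj]
    obtain ⟨j, hji, hjk⟩ := Fintype.exists_ne_ne_of_three_le_card (by simpa using hn) i k
    have hijk := h _ _ (transpose_skewSingle i j) (transpose_skewSingle j k)
    rwa [sum_mul_mul_mul_ofReal_eq, skewSingle_mul_skewSingle hji.symm hjk hik,
      sum_mul_single_mul] at hijk
  refine exists_linear_relation_of_mul_comm _ _ fun i k => ?_
  have hik := him k i
  simp only [Complex.mul_im, Complex.conj_re, Complex.conj_im] at hik
  linarith
end

section
/- Let U(s) be a real symmetric (n+1)×(n+1) matrix such that (sinh r · x, cosh r) U (sinh r · x, cosh r)ᵗ = 0 for every unit vector x ∈ S^{n−1}, where r > 0 is fixed with sinh r ≠ 0. Then there exists a ∈ ℝ with U = a · diag(Iₙ, −tanh²r). -/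
open Matrix

/-- `ψ(x) = (sinh r · x, cosh r)`. -/
noncomputable def psiGS (n : ℕ) (r : ℝ) (x : Fin n → ℝ) : Fin n ⊕ Fin 1 → ℝ :=
  Sum.elim (fun i => Real.sinh r * x i) fun _ => Real.cosh r

theorem stmt17 (n : ℕ) (hn : 2 ≤ n) (r : ℝ) (hr : 0 < r)
    (U : Matrix (Fin n ⊕ Fin 1) (Fin n ⊕ Fin 1) ℝ) (hsym : Uᵀ = U)
    (hzero : ∀ x : Fin n → ℝ, (∑ i, x i ^ 2) = 1 →
      ∑ i, ∑ j, psiGS n r x i * U i j * psiGS n r x j = 0) :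
    ∃ a : ℝ, U = Matrix.fromBlocks (a • (1 : Matrix (Fin n) (Fin n) ℝ)) 0 0
      (Matrix.of fun _ _ => -a * Real.tanh r ^ 2) := by
  have hS : 0 < Real.sinh r := Real.sinh_pos_iff.mpr hr
  have hC : 0 < Real.cosh r := Real.cosh_pos r
  -- symmetry of entries
  have hsymm : ∀ i j, U i j = U j i := by
    intro i j; exact congrFun (congrFun hsym j) i
  -- basis vector equations
  have h1 : ∀ k : Fin n, Real.sinh r * U (Sum.inl k) (Sum.inl k) * Real.sinh r +
      Real.cosh r * U (Sum.inr 0) (Sum.inl k) * Real.sinh r +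
      (Real.sinh r * U (Sum.inl k) (Sum.inr 0) * Real.cosh r +
        Real.cosh r * U (Sum.inr 0) (Sum.inr 0) * Real.cosh r) = 0 := by
    intro k
    have h := hzero (fun i => if i = k then 1 else 0) (by simp)
    simpa only [psiGS, Fintype.sum_sum_type, Fin.sum_univ_one, Sum.elim_inl, Sum.elim_inr,
      mul_ite, ite_mul, mul_one, mul_zero, zero_mul, one_mul, Finset.sum_ite_eq',
      Finset.mem_univ, if_true, Finset.sum_add_distrib] using h
  have h2 : ∀ k : Fin n, Real.sinh r * (-1) * U (Sum.inl k) (Sum.inl k) * (Real.sinh r * (-1)) +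
      Real.cosh r * U (Sum.inr 0) (Sum.inl k) * (Real.sinh r * (-1)) +
      (Real.sinh r * (-1) * U (Sum.inl k) (Sum.inr 0) * Real.cosh r +
        Real.cosh r * U (Sum.inr 0) (Sum.inr 0) * Real.cosh r) = 0 := by
    intro k
    have h := hzero (fun i => if i = k then -1 else 0) (by simp)
    simpa only [psiGS, Fintype.sum_sum_type, Fin.sum_univ_one, Sum.elim_inl, Sum.elim_inr,
      mul_ite, ite_mul, mul_one, mul_zero, zero_mul, one_mul, Finset.sum_ite_eq',
      Finset.mem_univ, if_true, Finset.sum_add_distrib] using h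
  -- off-block entries vanish
  have hb : ∀ k : Fin n, U (Sum.inl k) (Sum.inr 0) = 0 := by
    intro k
    have e1 := h1 k
    have e2 := h2 k
    have hbk : U (Sum.inr 0) (Sum.inl k) = U (Sum.inl k) (Sum.inr 0) := hsymm _ _
    rw [hbk] at e1 e2
    nlinarith [mul_pos hS hC]
  have hb' : ∀ k : Fin n, U (Sum.inr 0) (Sum.inl k) = 0 := by
    intro k; rw [hsymm]; exact hb k
  -- diagonal equations
  have hd : ∀ k : Fin n, Real.sinh r ^ 2 * U (Sum.inl k) (Sum.inl k) +
      Real.cosh r ^ 2 * U (Sum.inr 0) (Sum.inr 0) = 0 := by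
    intro k
    have e1 := h1 k
    rw [hb k, hb' k] at e1
    nlinarith
  -- off diagonal in the top-left block
  have ho : ∀ k l : Fin n, k ≠ l → U (Sum.inl k) (Sum.inl l) = 0 := by
    intro k l hkl
    set s : ℝ := Real.sqrt 2⁻¹ with hs
    have hs2 : s ^ 2 = 2⁻¹ := Real.sq_sqrt (by norm_num)
    have h := hzero (fun i => s * (if i = k then 1 else 0) + s * (if i = l then 1 else 0)) ?_
    · simp only [psiGS, Fintype.sum_sum_type, Fin.sum_univ_one, Sum.elim_inl, Sum.elim_inr,
        mul_add, add_mul, mul_ite, ite_mul, mul_one, mul_zero, zero_mul, one_mul,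
        Finset.sum_add_distrib, Finset.sum_ite_eq',
        Finset.mem_univ, if_true] at h
      rw [hb k, hb l, hb' k, hb' l] at h
      have hlk : U (Sum.inl l) (Sum.inl k) = U (Sum.inl k) (Sum.inl l) := hsymm _ _
      rw [hlk] at h
      have ek := hd k
      have el := hd l
      have hSne : Real.sinh r ^ 2 ≠ 0 := by positivity
      have : Real.sinh r ^ 2 * U (Sum.inl k) (Sum.inl l) = 0 := by
        linear_combination h - ek / 2 - el / 2 -
          (Real.sinh r ^ 2 * (U (Sum.inl k) (Sum.inl k) + 2 * U (Sum.inl k) (Sum.inl l) +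
            U (Sum.inl l) (Sum.inl l))) * hs2
      exact (mul_eq_zero.mp this).resolve_left hSne
    · have key : ∀ i : Fin n, (s * (if i = k then 1 else 0) + s * (if i = l then 1 else 0))^2
          = 2⁻¹ * (if i = k then 1 else 0) + 2⁻¹ * (if i = l then 1 else 0) := by
        intro i
        rcases eq_or_ne i k with rfl|h1 <;> rcases eq_or_ne i l with rfl|h2
        · exact absurd rfl hkl
        · rw [if_pos rfl, if_neg h2]; linear_combination hs2
        · rw [if_neg h1, if_pos rfl]; linear_combination hs2
        · rw [if_neg h1, if_neg h2]; ring
      simp only [key, Finset.sum_add_distrib, Finset.sum_ite_eq', Finset.mem_univ, if_true]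
      norm_num
  -- define a and finish
  refine ⟨U (Sum.inl ⟨0, by omega⟩) (Sum.inl ⟨0, by omega⟩), ?_⟩
  set a := U (Sum.inl ⟨0, by omega⟩) (Sum.inl ⟨0, by omega⟩) with ha
  have hdiag : ∀ k : Fin n, U (Sum.inl k) (Sum.inl k) = a := by
    intro k
    have e1 := hd k
    have e2 := hd ⟨0, by omega⟩
    have hSne : Real.sinh r ^ 2 ≠ 0 := by positivity
    have : Real.sinh r ^ 2 * (U (Sum.inl k) (Sum.inl k) - a) = 0 := by
      rw [← ha] at e2; nlinarith
    have := (mul_eq_zero.mp this).resolve_left hSne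
    linarith
  have hc : U (Sum.inr 0) (Sum.inr 0) = -a * Real.tanh r ^ 2 := by
    have e := hd ⟨0, by omega⟩
    rw [← ha] at e
    rw [Real.tanh_eq_sinh_div_cosh]
    field_simp
    nlinarith
  ext i j
  rcases i with i | i <;> rcases j with j | j
  · rcases eq_or_ne i j with rfl | hij
    · simp [Matrix.fromBlocks, Matrix.one_apply, hdiag i]
    · simp [Matrix.fromBlocks, Matrix.one_apply, hij, ho i j hij]
  · have : j = 0 := Subsingleton.elim _ _
    subst this
    simpa [Matrix.fromBlocks] using hb i
  · have : i = 0 := Subsingleton.elim _ _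
    subst this
    simpa [Matrix.fromBlocks] using hb' j
  · have hi : i = 0 := Subsingleton.elim _ _
    have hj : j = 0 := Subsingleton.elim _ _
    subst hi; subst hj
    simpa [Matrix.fromBlocks] using hc
end

section
/- Let U be a real symmetric (n+1)×(n+1) matrix (n ≥ 2) such that f(x) U f(x)ᵗ = 0 for all x ∈ ℝ^{n−1}, where f(x) = (x, |x|²/2, |x|²/2 + 1). Then there exists a ∈ ℝ such that U has block form [[a·I_{n−1}, 0, 0], [0, 2a, −a], [0, −a, 0]]. -/
open Matrix

/-- `f(x) = (x, |x|²/2, |x|²/2 + 1)`. -/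
noncomputable def psiHoro (m : ℕ) (x : Fin m → ℝ) : Fin m ⊕ Fin 2 → ℝ :=
  Sum.elim x fun j => if j = 0 then (∑ i, x i ^ 2) / 2 else (∑ i, x i ^ 2) / 2 + 1

set_option maxHeartbeats 2000000 in
theorem auxHoro (m : ℕ) (hm : 0 < m)
    (U : Matrix (Fin m ⊕ Fin 2) (Fin m ⊕ Fin 2) ℝ) (hsym : Uᵀ = U)
    (hzero : ∀ x : Fin m → ℝ,
      ∑ i, ∑ j, psiHoro m x i * U i j * psiHoro m x j = 0) :
    ∃ a : ℝ, U = Matrix.fromBlocks (a • (1 : Matrix (Fin m) (Fin m) ℝ)) 0 0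
      !![2 * a, -a; -a, 0] := by
  have hs : ∀ i j, U i j = U j i := by
    intro i j
    have := congrFun (congrFun hsym i) j
    simpa [Matrix.transpose_apply] using this.symm
  -- γ = 0
  have hγ : U (Sum.inr 1) (Sum.inr 1) = 0 := by
    have h := hzero 0
    simpa [psiHoro, Fintype.sum_sum_type, Fin.sum_univ_two] using h
  -- single-point evaluations
  have key : ∀ (k : Fin m), U (Sum.inl k) (Sum.inr 0) = 0 ∧ U (Sum.inl k) (Sum.inr 1) = 0 ∧
      U (Sum.inl k) (Sum.inl k) = - U (Sum.inr 0) (Sum.inr 1) ∧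
      U (Sum.inr 0) (Sum.inr 0) = -2 * U (Sum.inr 0) (Sum.inr 1) := by
    intro k
    have hone : ∀ t : ℝ,
        t * U (Sum.inr 1) (Sum.inl k) + t * U (Sum.inl k) (Sum.inr 1) +
          t ^ 2 * U (Sum.inr 0) (Sum.inr 1) * (1 / 2) +
          t ^ 2 * U (Sum.inr 1) (Sum.inr 0) * (1 / 2) +
          t ^ 2 * U (Sum.inr 1) (Sum.inr 1) +
          t ^ 2 * U (Sum.inl k) (Sum.inl k) +
          t ^ 3 * U (Sum.inr 1) (Sum.inl k) * (1 / 2) +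
          t ^ 3 * U (Sum.inr 0) (Sum.inl k) * (1 / 2) +
          t ^ 3 * U (Sum.inl k) (Sum.inr 0) * (1 / 2) +
          t ^ 3 * U (Sum.inl k) (Sum.inr 1) * (1 / 2) +
          t ^ 4 * U (Sum.inr 0) (Sum.inr 1) * (1 / 4) +
          t ^ 4 * U (Sum.inr 1) (Sum.inr 0) * (1 / 4) +
          t ^ 4 * U (Sum.inr 1) (Sum.inr 1) * (1 / 4) +
          t ^ 4 * U (Sum.inr 0) (Sum.inr 0) * (1 / 4) +
          U (Sum.inr 1) (Sum.inr 1) = 0 := by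
      intro t
      have h := hzero (Pi.single k t)
      simp [psiHoro, Fintype.sum_sum_type, Fin.sum_univ_two, Pi.single_apply, Finset.mul_sum,
        Finset.sum_ite_eq', mul_ite, ite_mul] at h
      ring_nf at h
      simp [Finset.sum_add_distrib, Finset.sum_ite_eq'] at h
      ring_nf at h
      linarith [h]
    have h1 := hone 1
    have h2 := hone (-1)
    have h3 := hone 2
    have h4 := hone (-2)
    norm_num at h1 h2 h3 h4
    have e1 := hs (Sum.inr 1) (Sum.inl k)
    have e2 := hs (Sum.inr 0) (Sum.inl k)
    have e3 := hs (Sum.inr 1) (Sum.inr 0)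
    refine ⟨by linarith, by linarith, by linarith, by linarith⟩
  obtain ⟨k0, -⟩ : ∃ k : Fin m, True := ⟨⟨0, hm⟩, trivial⟩
  have hα := (key k0).2.2.2
  -- off-diagonal
  have hoff : ∀ k l : Fin m, k ≠ l → U (Sum.inl k) (Sum.inl l) = 0 := by
    intro k l hkl
    have h := hzero (Pi.single k 1 + Pi.single l 1)
    simp [psiHoro, Fintype.sum_sum_type, Fin.sum_univ_two, Pi.single_apply, Pi.add_apply,
      Finset.mul_sum, Finset.sum_ite_eq', mul_ite, ite_mul, add_mul, mul_add,
      Finset.sum_add_distrib, hkl, hkl.symm] at h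
    have e1 : ∑ x : Fin m, ((if x = k then (1:ℝ) else 0) + if x = l then 1 else 0) ^ 2 = 2 := by
      simp [add_sq, mul_ite, ite_mul, Finset.sum_add_distrib, Finset.sum_ite_eq', hkl, hkl.symm]
      norm_num
    rw [e1] at h
    norm_num at h
    have f1 := (key k).1
    have f2 := (key k).2.1
    have f3 := (key k).2.2.1
    have g1 := (key l).1
    have g2 := (key l).2.1
    have g3 := (key l).2.2.1
    have s1 := hs (Sum.inr 1) (Sum.inl k)
    have s2 := hs (Sum.inr 0) (Sum.inl k)
    have s3 := hs (Sum.inr 1) (Sum.inl l)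
    have s4 := hs (Sum.inr 0) (Sum.inl l)
    have s5 := hs (Sum.inr 1) (Sum.inr 0)
    have s6 := hs (Sum.inl k) (Sum.inl l)
    linarith
  refine ⟨- U (Sum.inr 0) (Sum.inr 1), ?_⟩
  ext i j
  rcases i with k | i2 <;> rcases j with l | j2
  · by_cases hkl : k = l
    · subst hkl
      simp [Matrix.fromBlocks, (key k).2.2.1, Matrix.one_apply]
    · simp [Matrix.fromBlocks, hoff k l hkl, Matrix.one_apply, hkl]
  · fin_cases j2 <;>
      simp [Matrix.fromBlocks, (key k).1, (key k).2.1]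
  · fin_cases i2 <;>
      simp [Matrix.fromBlocks, hs (Sum.inr 0) (Sum.inl l), hs (Sum.inr 1) (Sum.inl l),
        (key l).1, (key l).2.1]
  · fin_cases i2 <;> fin_cases j2 <;>
      simp [Matrix.fromBlocks, hα, hγ, hs (Sum.inr 1) (Sum.inr 0)]

theorem stmt18 (n : ℕ) (hn : 2 ≤ n)
    (U : Matrix (Fin (n - 1) ⊕ Fin 2) (Fin (n - 1) ⊕ Fin 2) ℝ) (hsym : Uᵀ = U)
    (hzero : ∀ x : Fin (n - 1) → ℝ,
      ∑ i, ∑ j, psiHoro (n - 1) x i * U i j * psiHoro (n - 1) x j = 0) :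
    ∃ a : ℝ, U = Matrix.fromBlocks (a • (1 : Matrix (Fin (n - 1)) (Fin (n - 1)) ℝ)) 0 0
      !![2 * a, -a; -a, 0] :=
  auxHoro (n - 1) (by omega) U hsym hzero
end
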